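/- arXiv:2404.02166 — 2 statements merged into one kernel-verified Lean document; each statement's English description precedes it below -/
import Mathlib

section
/- Consider a binary-choice congestion-type game with n players where player m choosing a_m = 0 incurs utility U_m^loc (a constant), and choosing a_m = 1 incurs U_m^ec(a) = c_m + β_m·Σ_{j : a_j = 1} β_j + φ_m·Σ_{j : a_j = 1} φ_j, where c_m, β_m, φ_m are player-specific constants. Then F(a) = Σ_i a_i·(c_i + β_i·Σ_{j ≤ i} a_j β_j + φ_i·Σ_{j ≤ i} a_j φ_j) + Σ_i (1 − a_i)·U_i^loc is an exact potential function for this game. -/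
open Finset

lemma flip_lemma (n : ℕ) (c β φ Uloc : Fin n → ℝ)
    (m : Fin n) (a : Fin n → Bool) (ham : a m = true) :
    (c m + β m * (∑ j with a j, β j) + φ m * (∑ j with a j, φ j)) - Uloc m
    = ((∑ i with a i, (c i + β i * (∑ j ∈ Finset.Iic i with a j, β j)
          + φ i * (∑ j ∈ Finset.Iic i with a j, φ j)))
      + ∑ i with ¬ a i, Uloc i)
    - ((∑ i with (Function.update a m false) i,
          (c i + β i * (∑ j ∈ Finset.Iic i with (Function.update a m false) j, β j)
          + φ i * (∑ j ∈ Finset.Iic i with (Function.update a m false) j, φ j)))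
      + ∑ i with ¬ (Function.update a m false) i, Uloc i) := by
  set a' := Function.update a m false with ha'
  have hval : ∀ j, a' j = if j = m then false else a j := by
    intro j; simp [ha', Function.update]
  -- filter identities
  have hfilt : ∀ s : Finset (Fin n), s.filter (fun j => a' j = true)
      = (s.filter (fun j => a j = true)).erase m := by
    intro s; ext j
    by_cases h : j = m <;> simp [hval, h, ham, and_comm]
  have hfiltneg : Finset.univ.filter (fun j => ¬ a' j = true)
      = insert m (Finset.univ.filter (fun j => ¬ a j = true)) := by
    ext j
    by_cases h : j = m <;> simp [hval, h, ham]
  -- the negated-filter Uloc sums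
  have hnotmem : m ∉ Finset.univ.filter (fun j => ¬ a j = true) := by simp [ham]
  have hUsum : (∑ i with ¬ a' i, Uloc i) = Uloc m + ∑ i with ¬ a i, Uloc i := by
    rw [hfiltneg, Finset.sum_insert hnotmem]
  -- inner sums for a'
  have key2 : ∀ (f : Fin n → ℝ) (i : Fin n),
      (∑ j ∈ Finset.Iic i with a' j, f j)
        = (∑ j ∈ Finset.Iic i with a j, f j) - (if m ≤ i then f m else 0) := by
    intro f i
    rw [hfilt]
    by_cases h : m ≤ i
    · rw [Finset.sum_erase_eq_sub (by simp [ham, h]), if_pos h]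
    · rw [Finset.erase_eq_of_notMem (by simp [h]), if_neg h]; ring
  -- outer sum for a'
  have hmemf : m ∈ Finset.univ.filter (fun j => a j = true) := by simp [ham]
  have houter : (∑ i with a' i,
        (c i + β i * (∑ j ∈ Finset.Iic i with a' j, β j)
          + φ i * (∑ j ∈ Finset.Iic i with a' j, φ j)))
      = ∑ i ∈ (Finset.univ.filter (fun j => a j = true)).erase m,
          (c i + β i * ((∑ j ∈ Finset.Iic i with a j, β j) - (if m ≤ i then β m else 0))
            + φ i * ((∑ j ∈ Finset.Iic i with a j, φ j) - (if m ≤ i then φ m else 0))) := by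
    rw [hfilt]
    exact Finset.sum_congr rfl fun i _ => by rw [key2, key2]
  -- rewrite overall
  rw [hUsum, houter]
  have hsummand : ∀ i ∈ (Finset.univ.filter (fun j => a j = true)).erase m,
      (c i + β i * ((∑ j ∈ Finset.Iic i with a j, β j) - (if m ≤ i then β m else 0))
        + φ i * ((∑ j ∈ Finset.Iic i with a j, φ j) - (if m ≤ i then φ m else 0)))
      = (c i + β i * (∑ j ∈ Finset.Iic i with a j, β j)
          + φ i * (∑ j ∈ Finset.Iic i with a j, φ j))
        - (if m ≤ i then β i * β m + φ i * φ m else 0) := by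
    intro i _
    by_cases h : m ≤ i <;> simp [h] <;> ring
  rw [Finset.sum_congr rfl hsummand, Finset.sum_sub_distrib,
    Finset.sum_erase_eq_sub hmemf]
  -- compute the ite-sum
  have hiteset : ((Finset.univ.filter (fun j => a j = true)).erase m).filter (fun i => m ≤ i)
      = (Finset.Ioi m).filter (fun j => a j = true) := by
    ext j
    simp only [Finset.mem_filter, Finset.mem_erase, Finset.mem_univ, true_and,
      Finset.mem_Ioi]
    constructor
    · rintro ⟨⟨hne, hj⟩, hle⟩; exact ⟨lt_of_le_of_ne hle (Ne.symm hne), hj⟩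
    · rintro ⟨hlt, hj⟩; exact ⟨⟨ne_of_gt hlt, hj⟩, le_of_lt hlt⟩
  have hite : (∑ i ∈ (Finset.univ.filter (fun j => a j = true)).erase m,
        (if m ≤ i then β i * β m + φ i * φ m else 0))
      = (∑ i ∈ Finset.Ioi m with a i, β i) * β m
        + (∑ i ∈ Finset.Ioi m with a i, φ i) * φ m := by
    rw [← Finset.sum_filter, hiteset, Finset.sum_add_distrib, Finset.sum_mul,
      Finset.sum_mul]
  rw [hite]
  -- split the full sums
  have hsplit : ∀ f : Fin n → ℝ, (∑ j with a j, f j)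
      = (∑ j ∈ Finset.Iic m with a j, f j) + (∑ j ∈ Finset.Ioi m with a j, f j) := by
    intro f
    rw [← Finset.sum_union (Finset.disjoint_filter_filter (by simp [Finset.disjoint_left])), ← Finset.filter_union]
    congr 2
    ext j; simp [le_or_gt]
  rw [hsplit β, hsplit φ]
  ring

/-- Theorem 3 of the paper: the binary-choice offloading game, where player `m`
choosing `a m = 0` incurs constant utility `Uloc m` and choosing `a m = 1`
incurs `c m + β m · ∑_{j : a j = 1} β j + φ m · ∑_{j : a j = 1} φ j`, admits
the exact potential
`F(a) = ∑ i, a i·(c i + β i·∑_{j ≤ i} a j β j + φ i·∑_{j ≤ i} a j φ j)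
      + ∑ i, (1 − a i)·Uloc i`. -/
theorem stmt_10 (n : ℕ) (c β φ Uloc : Fin n → ℝ)
    (U : Fin n → (Fin n → Bool) → ℝ)
    (hU : ∀ m a, U m a =
      if a m then
        c m + β m * (∑ j with a j, β j) + φ m * (∑ j with a j, φ j)
      else Uloc m)
    (F : (Fin n → Bool) → ℝ)
    (hF : ∀ a, F a =
      (∑ i with a i, (c i + β i * (∑ j ∈ Finset.Iic i with a j, β j)
          + φ i * (∑ j ∈ Finset.Iic i with a j, φ j)))
      + ∑ i with ¬ a i, Uloc i) :
    ∀ (m : Fin n) (a : Fin n → Bool) (b : Bool),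
      U m a - U m (Function.update a m b) =
        F a - F (Function.update a m b) := by
  intro m a b
  by_cases hb : a m = b
  · have h : Function.update a m b = a := by rw [← hb]; exact Function.update_eq_self m a
    rw [h]; ring
  · cases b with
    | false =>
      have ham : a m = true := by revert hb; cases a m <;> simp
      have key := flip_lemma n c β φ Uloc m a ham
      have ham' : (Function.update a m false) m = false := by simp
      rw [hU, hU, hF, hF, ham, ham']
      simpa using key
    | true =>
      have ham : a m = false := by revert hb; cases a m <;> simp
      have ha2 : (Function.update a m true) m = true := by simp
      have hback : Function.update (Function.update a m true) m false = a := by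
        funext j
        by_cases h : j = m <;> simp [Function.update, h, ham]
      have key := flip_lemma n c β φ Uloc m (Function.update a m true) ha2
      rw [hback] at key
      rw [hU, hU, hF, hF, ham, ha2]
      simp only [Bool.false_eq_true, if_false, if_true]
      linarith [key]
end

section
/- For constants φ > 0, H > 0, μ ≥ 1, and any points p, p⁰, p_m ∈ ℝ², the inequality log₂(1 + φ/(H² + ‖p − p_m‖²)^μ) ≥ log₂(1 + φ/(H² + ‖p⁰ − p_m‖²)^μ) − [μ·φ·log₂(e)·(‖p − p_m‖² − ‖p⁰ − p_m‖²)] / ([φ + (H² + ‖p⁰ − p_m‖²)^μ]·(H² + ‖p⁰ − p_m‖²)) holds. -/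
/-!
With `d = ‖p - p_m‖²`, the right-hand side is `g (H² + d) / log 2` for
`g x = log (1 + φ / x ^ μ)`. On `x > 0` we have `g' x = -μφ / (x (φ + x ^ μ))`, whose
denominator increases with `x`, so `g'` is monotone and `g` is convex. A convex function lies
above its tangent lines, and the tangent line of `g` at `H² + ‖p⁰ - p_m‖²` is the claimed
lower bound.
-/

open Real Set

theorem ConvexOn.add_mul_sub_le_of_hasDerivAt {S : Set ℝ} {f : ℝ → ℝ} {x y f' : ℝ}
    (hf : ConvexOn ℝ S f) (hx : x ∈ S) (hy : y ∈ S) (hf' : HasDerivAt f f' x) :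
    f x + f' * (y - x) ≤ f y := by
  rcases lt_trichotomy x y with hxy | rfl | hyx
  · have hslope := hf.le_slope_of_hasDerivAt hx hy hxy hf'
    rw [slope_def_field, le_div_iff₀ (sub_pos.mpr hxy)] at hslope
    linarith
  · simp
  · have hslope := hf.slope_le_of_hasDerivAt hy hx hyx hf'
    rw [slope_def_field, div_le_iff₀ (sub_pos.mpr hyx)] at hslope
    linarith

section LogOneAddDivRpow

variable {φ μ : ℝ}

theorem hasDerivAt_log_one_add_div_rpow (hφ : 0 ≤ φ) {x : ℝ} (hx : 0 < x) :
    HasDerivAt (fun y : ℝ => log (1 + φ / y ^ μ)) (-(μ * φ) / (x * (φ + x ^ μ))) x := by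
  have hxμ : 0 < x ^ μ := rpow_pos_of_pos hx μ
  have hinner : HasDerivAt (fun y : ℝ => 1 + φ * (y ^ μ)⁻¹)
      (φ * (-(μ * x ^ (μ - 1)) / (x ^ μ) ^ 2)) x :=
    (((hasDerivAt_rpow_const (Or.inl hx.ne')).inv hxμ.ne').const_mul φ).const_add 1
  have hlog := hinner.log (by positivity)
  have hrpow_sub_one : x ^ (μ - 1) = x ^ μ / x := rpow_sub_one hx.ne' μ
  convert hlog using 1
  · simp only [div_eq_mul_inv]
  · rw [hrpow_sub_one]
    field_simp
    ring

theorem monotoneOn_neg_div_mul_add_rpow (hφ : 0 ≤ φ) (hμ : 0 ≤ μ) :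
    MonotoneOn (fun x : ℝ => -(μ * φ) / (x * (φ + x ^ μ))) (Ioi 0) := by
  intro x (hx : 0 < x) y _ hxy
  have hden : x * (φ + x ^ μ) ≤ y * (φ + y ^ μ) :=
    mul_le_mul hxy (by gcongr) (by positivity) (hx.le.trans hxy)
  simp only [neg_div]
  gcongr

theorem convexOn_log_one_add_div_rpow (hφ : 0 ≤ φ) (hμ : 0 ≤ μ) :
    ConvexOn ℝ (Ioi 0) (fun x : ℝ => log (1 + φ / x ^ μ)) := by
  have hderiv : ∀ x ∈ Ioi (0 : ℝ), HasDerivAt (fun y : ℝ => log (1 + φ / y ^ μ))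
      (-(μ * φ) / (x * (φ + x ^ μ))) x :=
    fun x hx => hasDerivAt_log_one_add_div_rpow hφ hx
  refine MonotoneOn.convexOn_of_deriv (convex_Ioi 0)
    (fun x hx => (hderiv x hx).continuousAt.continuousWithinAt)
    (fun x hx => (hderiv x (interior_subset hx)).differentiableAt.differentiableWithinAt) ?_
  rw [interior_Ioi]
  exact (monotoneOn_neg_div_mul_add_rpow hφ hμ).congr
    fun x hx => ((hderiv x hx).deriv).symm

end LogOneAddDivRpow

/-- Explicit global concave lower bound (Theorem 9 / Eq. 58): for constants
`φ > 0`, `H > 0`, `μ ≥ 1` and points `p, p⁰, p_m ∈ ℝ²`,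
`log₂(1 + φ/(H² + ‖p − p_m‖²)^μ)` is bounded below by its linearization in the
squared distance at `p⁰`. -/
theorem stmt_13 (φ H μ : ℝ) (hφ : 0 < φ) (hH : 0 < H) (hμ : 1 ≤ μ)
    (p p₀ pm : EuclideanSpace ℝ (Fin 2)) :
    Real.logb 2 (1 + φ / (H ^ 2 + ‖p₀ - pm‖ ^ 2) ^ μ)
        - (μ * φ * Real.logb 2 (Real.exp 1)
            * (‖p - pm‖ ^ 2 - ‖p₀ - pm‖ ^ 2))
          / ((φ + (H ^ 2 + ‖p₀ - pm‖ ^ 2) ^ μ) * (H ^ 2 + ‖p₀ - pm‖ ^ 2))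
      ≤ Real.logb 2 (1 + φ / (H ^ 2 + ‖p - pm‖ ^ 2) ^ μ) := by
  set a := H ^ 2 + ‖p₀ - pm‖ ^ 2
  set b := H ^ 2 + ‖p - pm‖ ^ 2
  have ha : 0 < a := by positivity
  have hb : 0 < b := by positivity
  have htangent :=
    (convexOn_log_one_add_div_rpow hφ.le (zero_le_one.trans hμ)).add_mul_sub_le_of_hasDerivAt
      ha hb (hasDerivAt_log_one_add_div_rpow hφ.le ha)
  calc _ = (log (1 + φ / a ^ μ) + -(μ * φ) / (a * (φ + a ^ μ)) * (b - a)) / log 2 := by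
        simp only [logb, log_exp]
        field_simp
        ring
    _ ≤ log (1 + φ / b ^ μ) / log 2 := by gcongr
end
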